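/- arXiv:2108.05091 — 2 statements merged into one kernel-verified Lean document; each statement's English description precedes it below -/
import Mathlib

section
/- Let f, g be probability density functions on ℝ with means μ_f, μ_g and variances σ_f², σ_g² (all finite). Then (μ_f − μ_g)² ≤ 2(μ_f² + μ_g² + σ_f² + σ_g²) · d_TV(f,g), where d_TV(f,g) = (1/2)∫|f − g|. -/
/-!
The difference of the means is `∫ y (f - g)`, so `|μ_f - μ_g| ≤ ∫ |y| |f - g|`. Cauchy–Schwarz
with weight `|f - g|` bounds the square of the right-hand side by `∫ y² |f - g| · ∫ |f - g|`, and
`|f - g| ≤ f + g` bounds the first factor by the sum of the second moments `μ² + σ²`, while the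
second factor is `2 d_TV(f, g)`.
-/

open MeasureTheory

noncomputable def dTV (f g : ℝ → ℝ) : ℝ := (1/2) * ∫ x, |f x - g x|

section

variable {α : Type*} [MeasurableSpace α] {μ : Measure α}

theorem sq_integral_mul_le_integral_sq_mul_mul_integral {a w : α → ℝ} (hw0 : 0 ≤ᵐ[μ] w)
    (hw : Integrable w μ) (haw : Integrable (fun x => a x * w x) μ)
    (ha2w : Integrable (fun x => a x ^ 2 * w x) μ) :
    (∫ x, a x * w x ∂μ) ^ 2 ≤ (∫ x, a x ^ 2 * w x ∂μ) * ∫ x, w x ∂μ := by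
  have hquad : ∀ t : ℝ, 0 ≤ (∫ x, w x ∂μ) * (t * t) + (-2 * ∫ x, a x * w x ∂μ) * t
      + ∫ x, a x ^ 2 * w x ∂μ := by
    intro t
    have hexpand : ∫ x, (a x - t) ^ 2 * w x ∂μ = (∫ x, w x ∂μ) * (t * t)
        + (-2 * ∫ x, a x * w x ∂μ) * t + ∫ x, a x ^ 2 * w x ∂μ := by
      have hpt : ∀ x, (a x - t) ^ 2 * w x = a x ^ 2 * w x - 2 * t * (a x * w x) + t ^ 2 * w x :=
        fun x => by ring
      simp_rw [hpt]
      rw [integral_add _ (hw.const_mul _), integral_sub ha2w (haw.const_mul _),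
        integral_const_mul, integral_const_mul]
      · ring
      · exact ha2w.sub (haw.const_mul _)
    rw [← hexpand]
    exact integral_nonneg_of_ae (hw0.mono fun x hx => mul_nonneg (sq_nonneg _) hx)
  have hdiscr := discrim_le_zero hquad
  rw [discrim] at hdiscr
  nlinarith

theorem abs_integral_mul_sub_integral_mul_le {φ f g : α → ℝ}
    (hφf : Integrable (fun x => φ x * f x) μ) (hφg : Integrable (fun x => φ x * g x) μ) :
    |∫ x, φ x * f x ∂μ - ∫ x, φ x * g x ∂μ| ≤ ∫ x, |φ x| * |f x - g x| ∂μ := by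
  rw [← integral_sub hφf hφg]
  calc |∫ x, φ x * f x - φ x * g x ∂μ| ≤ ∫ x, |φ x * f x - φ x * g x| ∂μ :=
        abs_integral_le_integral_abs
    _ = ∫ x, |φ x| * |f x - g x| ∂μ := by simp_rw [← mul_sub, abs_mul]

theorem sq_integral_mul_sub_integral_mul_le {φ f g : α → ℝ} (hf0 : 0 ≤ᵐ[μ] f) (hg0 : 0 ≤ᵐ[μ] g)
    (hf : Integrable f μ) (hg : Integrable g μ)
    (hφf : Integrable (fun x => φ x * f x) μ) (hφg : Integrable (fun x => φ x * g x) μ)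
    (hφ2f : Integrable (fun x => φ x ^ 2 * f x) μ) (hφ2g : Integrable (fun x => φ x ^ 2 * g x) μ) :
    (∫ x, φ x * f x ∂μ - ∫ x, φ x * g x ∂μ) ^ 2 ≤
      ((∫ x, φ x ^ 2 * f x ∂μ) + ∫ x, φ x ^ 2 * g x ∂μ) * ∫ x, |f x - g x| ∂μ := by
  have hmul : (fun x => |φ x| * |f x - g x|) = fun x => |φ x * f x - φ x * g x| := by
    simp_rw [← mul_sub, abs_mul]
  have hsq : (fun x => |φ x| ^ 2 * |f x - g x|) = fun x => |φ x ^ 2 * f x - φ x ^ 2 * g x| := by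
    simp_rw [← mul_sub, abs_mul, abs_pow]
  have hsq_int : Integrable (fun x => |φ x| ^ 2 * |f x - g x|) μ := hsq ▸ (hφ2f.sub hφ2g).abs
  have hsecond : ∫ x, |φ x| ^ 2 * |f x - g x| ∂μ ≤
      (∫ x, φ x ^ 2 * f x ∂μ) + ∫ x, φ x ^ 2 * g x ∂μ := by
    rw [← integral_add hφ2f hφ2g]
    refine integral_mono_ae hsq_int (hφ2f.add hφ2g) ?_
    filter_upwards [hf0, hg0] with x hfx hgx
    have hfg : |f x - g x| ≤ f x + g x := by
      simpa only [abs_of_nonneg hfx, abs_of_nonneg hgx] using abs_sub (f x) (g x)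
    rw [sq_abs, ← mul_add]
    exact mul_le_mul_of_nonneg_left hfg (sq_nonneg _)
  have hcs := sq_integral_mul_le_integral_sq_mul_mul_integral
    (Filter.Eventually.of_forall fun x => abs_nonneg (f x - g x)) (hf.sub hg).abs
    (hmul ▸ (hφf.sub hφg).abs) hsq_int
  calc (∫ x, φ x * f x ∂μ - ∫ x, φ x * g x ∂μ) ^ 2
      ≤ (∫ x, |φ x| * |f x - g x| ∂μ) ^ 2 := by
        rw [← sq_abs]
        exact pow_le_pow_left₀ (abs_nonneg _) (abs_integral_mul_sub_integral_mul_le hφf hφg) 2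
    _ ≤ (∫ x, |φ x| ^ 2 * |f x - g x| ∂μ) * ∫ x, |f x - g x| ∂μ := hcs
    _ ≤ _ := mul_le_mul_of_nonneg_right hsecond (integral_nonneg fun x => abs_nonneg _)

end

theorem stmt_3_general (f g : ℝ → ℝ) (μf μg σf σg : ℝ)
    (hf : Integrable f) (hg : Integrable g)
    (hf0 : ∀ x, 0 ≤ f x) (hg0 : ∀ x, 0 ≤ g x)
    (hf1' : Integrable (fun y => y * f y))
    (hg1' : Integrable (fun y => y * g y))
    (hf2 : Integrable (fun y => y ^ 2 * f y))
    (hg2 : Integrable (fun y => y ^ 2 * g y))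
    (hμf : μf = ∫ y, y * f y) (hμg : μg = ∫ y, y * g y)
    (hσf : σf ^ 2 = (∫ y, y ^ 2 * f y) - μf ^ 2)
    (hσg : σg ^ 2 = (∫ y, y ^ 2 * g y) - μg ^ 2) :
    (μf - μg) ^ 2 ≤ 2 * (μf ^ 2 + μg ^ 2 + σf ^ 2 + σg ^ 2) * dTV f g := by
  have h := sq_integral_mul_sub_integral_mul_le (Filter.Eventually.of_forall hf0)
    (Filter.Eventually.of_forall hg0) hf hg hf1' hg1' hf2 hg2
  rw [← hμf, ← hμg] at h
  calc (μf - μg) ^ 2 ≤ ((∫ y, y ^ 2 * f y) + ∫ y, y ^ 2 * g y) * ∫ y, |f y - g y| := h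
    _ = 2 * (μf ^ 2 + μg ^ 2 + σf ^ 2 + σg ^ 2) * dTV f g := by
        rw [dTV, hσf, hσg]; ring

theorem stmt_3 (f g : ℝ → ℝ) (μf μg σf σg : ℝ)
    (hfm : Measurable f) (hgm : Measurable g)
    (hf : Integrable f) (hg : Integrable g)
    (hf0 : ∀ x, 0 ≤ f x) (hg0 : ∀ x, 0 ≤ g x)
    (hf1 : ∫ x, f x = 1) (hg1 : ∫ x, g x = 1)
    (hf1' : Integrable (fun y => y * f y))
    (hg1' : Integrable (fun y => y * g y))
    (hf2 : Integrable (fun y => y ^ 2 * f y))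
    (hg2 : Integrable (fun y => y ^ 2 * g y))
    (hμf : μf = ∫ y, y * f y) (hμg : μg = ∫ y, y * g y)
    (hσf : σf ^ 2 = (∫ y, y ^ 2 * f y) - μf ^ 2)
    (hσg : σg ^ 2 = (∫ y, y ^ 2 * g y) - μg ^ 2) :
    (μf - μg) ^ 2 ≤ 2 * (μf ^ 2 + μg ^ 2 + σf ^ 2 + σg ^ 2) * dTV f g :=
  stmt_3_general f g μf μg σf σg hf hg hf0 hg0 hf1' hg1' hf2 hg2 hμf hμg hσf hσg
end

section
/- Let f, g be probability density functions on ℝ with means μ_f, μ_g and variances σ_f², σ_g², not both densities degenerate (so that μ_f² + μ_g² + σ_f² + σ_g² > 0). Then 1 − d_TV(f,g) ≤ 1/2 + (2μ_f μ_g + σ_f² + σ_g²)/(2(μ_f² + μ_g² + σ_f² + σ_g²)). -/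
/-!
With `h = f - g`, the difference of means is `∫ y h(y) dy`, and Cauchy–Schwarz for the measure
`|h(y)| dy` bounds its square by `(∫ y² |h|) (∫ |h|)`. As `|h| ≤ f + g`, the first factor is at most
the sum `μ_f² + σ_f² + μ_g² + σ_g²` of the second moments, and the second is `2 d_TV(f,g)`; so
`(μ_f - μ_g)² / (2(μ_f² + μ_g² + σ_f² + σ_g²)) ≤ d_TV(f,g)`, which is the claim rearranged.
-/

open MeasureTheory

namespace MeasureTheory

variable {α : Type*} [MeasurableSpace α] {μ : Measure α}

theorem Integrable.mul_of_integrable_sq_mul {u w : α → ℝ} (hu : AEStronglyMeasurable u μ)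
    (hw : Integrable w μ) (hu2w : Integrable (fun x => u x ^ 2 * w x) μ) :
    Integrable (fun x => u x * w x) μ := by
  refine (hw.norm.add hu2w.norm).mono' (hu.mul hw.1) (ae_of_all _ fun x => ?_)
  have hu_le : |u x| ≤ 1 + u x ^ 2 := by
    rcases le_total |u x| 1 with h | h
    · nlinarith [sq_nonneg (u x)]
    · nlinarith [sq_abs (u x)]
  simp only [Real.norm_eq_abs, abs_mul, Pi.add_apply, abs_pow, sq_abs]
  nlinarith [abs_nonneg (w x)]

/-- Cauchy–Schwarz for the measure `w • μ`. -/
theorem sq_integral_mul_le_integral_sq_mul_mul_integral {u w : α → ℝ}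
    (hu : AEStronglyMeasurable u μ) (hw0 : 0 ≤ᵐ[μ] w) (hw : Integrable w μ)
    (hu2w : Integrable (fun x => u x ^ 2 * w x) μ) :
    (∫ x, u x * w x ∂μ) ^ 2 ≤ (∫ x, u x ^ 2 * w x ∂μ) * ∫ x, w x ∂μ := by
  have huw := hw.mul_of_integrable_sq_mul hu hu2w
  -- `t ↦ ∫ (t u - 1)² w` is a nonnegative quadratic, so its discriminant is nonpositive.
  have hquad : ∀ t : ℝ, 0 ≤ (∫ x, u x ^ 2 * w x ∂μ) * (t * t)
      + (-2 * ∫ x, u x * w x ∂μ) * t + ∫ x, w x ∂μ := by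
    intro t
    have hnonneg : 0 ≤ ∫ x, (t * u x - 1) ^ 2 * w x ∂μ :=
      integral_nonneg_of_ae (hw0.mono fun x hx => mul_nonneg (sq_nonneg _) hx)
    have hexpand : (fun x => (t * u x - 1) ^ 2 * w x)
        = fun x => u x ^ 2 * w x * (t * t) + u x * w x * (-2 * t) + w x := by
      funext x; ring
    have hint : Integrable (fun x => u x ^ 2 * w x * (t * t) + u x * w x * (-2 * t)) μ :=
      (hu2w.mul_const _).add (huw.mul_const _)
    rw [hexpand, integral_add hint hw, integral_add (hu2w.mul_const _) (huw.mul_const _),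
      integral_mul_const, integral_mul_const] at hnonneg
    linarith
  have := discrim_le_zero hquad
  rw [discrim] at this
  linarith

theorem sq_integral_mul_sub_integral_mul_le {u f g : α → ℝ} (hu : AEStronglyMeasurable u μ)
    (hf0 : 0 ≤ᵐ[μ] f) (hg0 : 0 ≤ᵐ[μ] g) (hf : Integrable f μ) (hg : Integrable g μ)
    (hu2f : Integrable (fun x => u x ^ 2 * f x) μ) (hu2g : Integrable (fun x => u x ^ 2 * g x) μ) :
    (∫ x, u x * f x ∂μ - ∫ x, u x * g x ∂μ) ^ 2
      ≤ ((∫ x, u x ^ 2 * f x ∂μ) + ∫ x, u x ^ 2 * g x ∂μ) * ∫ x, |f x - g x| ∂μ := by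
  have hfg : Integrable (fun x => |f x - g x|) μ := (hf.sub hg).abs
  have hbound : ∀ᵐ x ∂μ, u x ^ 2 * |f x - g x| ≤ u x ^ 2 * f x + u x ^ 2 * g x := by
    filter_upwards [hf0, hg0] with x hfx hgx
    simp only [Pi.zero_apply] at hfx hgx
    rw [← mul_add]
    exact mul_le_mul_of_nonneg_left (abs_sub_le_iff.2 ⟨by linarith, by linarith⟩) (sq_nonneg _)
  have hu2fg : Integrable (fun x => u x ^ 2 * |f x - g x|) μ := by
    refine (hu2f.add hu2g).mono' ((hu.pow 2).mul hfg.1) ?_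
    filter_upwards [hbound] with x hx
    rw [Real.norm_of_nonneg (by positivity)]
    exact hx
  have hmoment :
      ∫ x, u x ^ 2 * |f x - g x| ∂μ ≤ (∫ x, u x ^ 2 * f x ∂μ) + ∫ x, u x ^ 2 * g x ∂μ := by
    rw [← integral_add hu2f hu2g]
    exact integral_mono_ae hu2fg (hu2f.add hu2g) hbound
  have hdiff : ∫ x, u x * f x ∂μ - ∫ x, u x * g x ∂μ = ∫ x, u x * (f x - g x) ∂μ := by
    rw [← integral_sub (hf.mul_of_integrable_sq_mul hu hu2f) (hg.mul_of_integrable_sq_mul hu hu2g)]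
    simp only [mul_sub]
  have habs : |∫ x, u x * (f x - g x) ∂μ| ≤ ∫ x, |u x| * |f x - g x| ∂μ :=
    abs_integral_le_integral_abs.trans_eq (by simp only [abs_mul])
  have hcs := sq_integral_mul_le_integral_sq_mul_mul_integral hu.norm
    (ae_of_all _ fun x => abs_nonneg (f x - g x)) hfg
    (by simpa only [Real.norm_eq_abs, sq_abs] using hu2fg)
  simp only [Real.norm_eq_abs, sq_abs] at hcs
  calc (∫ x, u x * f x ∂μ - ∫ x, u x * g x ∂μ) ^ 2
      = |∫ x, u x * (f x - g x) ∂μ| ^ 2 := by rw [hdiff, sq_abs]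
    _ ≤ (∫ x, |u x| * |f x - g x| ∂μ) ^ 2 := pow_le_pow_left₀ (abs_nonneg _) habs 2
    _ ≤ (∫ x, u x ^ 2 * |f x - g x| ∂μ) * ∫ x, |f x - g x| ∂μ := hcs
    _ ≤ _ := mul_le_mul_of_nonneg_right hmoment (integral_nonneg fun x => abs_nonneg _)

end MeasureTheory

theorem stmt_4_general (f g : ℝ → ℝ) (μf μg σf σg : ℝ)
    (hf : Integrable f) (hg : Integrable g)
    (hf0 : ∀ x, 0 ≤ f x) (hg0 : ∀ x, 0 ≤ g x)
    (hf2 : Integrable (fun y => y ^ 2 * f y))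
    (hg2 : Integrable (fun y => y ^ 2 * g y))
    (hμf : μf = ∫ y, y * f y) (hμg : μg = ∫ y, y * g y)
    (hσf : σf ^ 2 = (∫ y, y ^ 2 * f y) - μf ^ 2)
    (hσg : σg ^ 2 = (∫ y, y ^ 2 * g y) - μg ^ 2)
    (hpos : 0 < μf ^ 2 + μg ^ 2 + σf ^ 2 + σg ^ 2) :
    1 - dTV f g ≤ 1/2 + (2 * μf * μg + σf ^ 2 + σg ^ 2) /
      (2 * (μf ^ 2 + μg ^ 2 + σf ^ 2 + σg ^ 2)) := by
  set S := μf ^ 2 + μg ^ 2 + σf ^ 2 + σg ^ 2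
  have hmeans : (μf - μg) ^ 2 ≤ S * ∫ x, |f x - g x| := by
    have := sq_integral_mul_sub_integral_mul_le aestronglyMeasurable_id
      (ae_of_all _ hf0) (ae_of_all _ hg0) hf hg hf2 hg2
    have hS : (∫ x, x ^ 2 * f x) + ∫ x, x ^ 2 * g x = S := by linarith
    simpa only [id, ← hμf, ← hμg, hS] using this
  have hrhs : (2 * μf * μg + σf ^ 2 + σg ^ 2) / (2 * S) = 1 / 2 - (μf - μg) ^ 2 / (2 * S) := by
    field_simp
    ring
  have hgap : (μf - μg) ^ 2 / (2 * S) ≤ dTV f g := by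
    rw [dTV, div_le_iff₀ (by positivity)]
    linarith
  linarith

theorem stmt_4 (f g : ℝ → ℝ) (μf μg σf σg : ℝ)
    (hfm : Measurable f) (hgm : Measurable g)
    (hf : Integrable f) (hg : Integrable g)
    (hf0 : ∀ x, 0 ≤ f x) (hg0 : ∀ x, 0 ≤ g x)
    (hf1 : ∫ x, f x = 1) (hg1 : ∫ x, g x = 1)
    (hf1' : Integrable (fun y => y * f y))
    (hg1' : Integrable (fun y => y * g y))
    (hf2 : Integrable (fun y => y ^ 2 * f y))
    (hg2 : Integrable (fun y => y ^ 2 * g y))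
    (hμf : μf = ∫ y, y * f y) (hμg : μg = ∫ y, y * g y)
    (hσf : σf ^ 2 = (∫ y, y ^ 2 * f y) - μf ^ 2)
    (hσg : σg ^ 2 = (∫ y, y ^ 2 * g y) - μg ^ 2)
    (hpos : 0 < μf ^ 2 + μg ^ 2 + σf ^ 2 + σg ^ 2) :
    1 - dTV f g ≤ 1/2 + (2 * μf * μg + σf ^ 2 + σg ^ 2) /
      (2 * (μf ^ 2 + μg ^ 2 + σf ^ 2 + σg ^ 2)) :=
  stmt_4_general f g μf μg σf σg hf hg hf0 hg0 hf2 hg2 hμf hμg hσf hσg hpos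
end
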